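/- arXiv:2304.06888 — 7 statements merged into one kernel-verified Lean document; each statement's English description precedes it below -/
import Mathlib

section
/- If (g, [·,·], T) is a Hom-Lie algebra with equivariant twist map T, then T∘[·,·] defines a Lie bracket on g; i.e., [x,y]_Lie := T([x,y]) is skew-symmetric and satisfies the Jacobi identity. -/
/-!
By skew-symmetry, equivariance on the left gives `T [x, y] = [x, T y]` as well, hence
`T [x, T [y, z]] = T [T x, [y, z]]`; the Jacobi sum for `T ∘ [·,·]` is then `T` applied to the
Hom-Jacobi sum, which vanishes.
-/

section EquivariantTwist

variable {R M : Type*} [CommSemiring R] [AddCommGroup M] [Module R M]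
  {br : M →ₗ[R] M →ₗ[R] M} {T : M →ₗ[R] M}

theorem map_bracket_eq_bracket_map_right (skew : ∀ x y, br x y = - br y x)
    (equivar : ∀ x y, T (br x y) = br (T x) y) (x y : M) :
    T (br x y) = br x (T y) := by
  rw [skew x y, map_neg, equivar, skew (T y) x, neg_neg]

theorem map_bracket_map_bracket (skew : ∀ x y, br x y = - br y x)
    (equivar : ∀ x y, T (br x y) = br (T x) y) (x y z : M) :
    T (br x (T (br y z))) = T (br (T x) (br y z)) := by
  rw [equivar x, map_bracket_eq_bracket_map_right skew equivar (T x)]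

theorem map_bracket_skew (skew : ∀ x y, br x y = - br y x) (x y : M) :
    T (br x y) = - T (br y x) := by
  rw [skew x y, map_neg]

theorem map_bracket_jacobi (skew : ∀ x y, br x y = - br y x)
    (homJacobi : ∀ x y z, br (T x) (br y z) + br (T y) (br z x) + br (T z) (br x y) = 0)
    (equivar : ∀ x y, T (br x y) = br (T x) y) (x y z : M) :
    T (br x (T (br y z))) + T (br y (T (br z x))) + T (br z (T (br x y))) = 0 := by
  simp only [map_bracket_map_bracket skew equivar, ← map_add, homJacobi, map_zero]

end EquivariantTwist

theorem stmt_0_general {F : Type*} [Field F]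
    {g : Type*} [AddCommGroup g] [Module F g]
    (br : g →ₗ[F] g →ₗ[F] g) (T : g →ₗ[F] g)
    (skew : ∀ x y, br x y = - br y x)
    (homJacobi : ∀ x y z, br (T x) (br y z) + br (T y) (br z x) + br (T z) (br x y) = 0)
    (equivar : ∀ x y, T (br x y) = br (T x) y) :
    (∀ x y, T (br x y) = - T (br y x)) ∧
    (∀ x y z,
      T (br x (T (br y z))) + T (br y (T (br z x))) + T (br z (T (br x y))) = 0) :=
  ⟨map_bracket_skew skew, map_bracket_jacobi skew homJacobi equivar⟩

/-- If (g,[·,·],T) is a Hom-Lie algebra with equivariant twist map T,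
then [x,y]_Lie := T([x,y]) is skew-symmetric and satisfies the Jacobi identity. -/
theorem stmt_0 {F : Type*} [Field F] [CharZero F]
    {g : Type*} [AddCommGroup g] [Module F g] [FiniteDimensional F g]
    (br : g →ₗ[F] g →ₗ[F] g) (T : g →ₗ[F] g)
    (skew : ∀ x y, br x y = - br y x)
    (homJacobi : ∀ x y z, br (T x) (br y z) + br (T y) (br z x) + br (T z) (br x y) = 0)
    (equivar : ∀ x y, T (br x y) = br (T x) y) :
    (∀ x y, T (br x y) = - T (br y x)) ∧
    (∀ x y z,
      T (br x (T (br y z))) + T (br y (T (br z x))) + T (br z (T (br x y))) = 0) :=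
  stmt_0_general br T skew homJacobi equivar
end

section
/- Let (g, [·,·], T) be a Hom-Lie algebra with equivariant twist map T. If g is nilpotent as a Hom-Lie algebra (i.e., the descending series g^1 = [g,g], g^{n+1} = [g, g^n] eventually vanishes), then the Lie algebra (g, [·,·]_Lie) with [x,y]_Lie = T([x,y]) is a nilpotent Lie algebra. -/
/-!
Equivariance gives `[x, y]_Lie = T [x, y] = [T x, y]`, so every Lie bracket is a Hom-Lie
bracket and the lower central series of the Lie algebra lies termwise inside the descending
series of the Hom-Lie algebra.
-/

variable {F : Type*} [Field F] [CharZero F]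
  {g : Type*} [AddCommGroup g] [Module F g] [FiniteDimensional F g]

/-- The descending series g^1 = [g,g], g^{n+1} = [g, g^n] of a (Hom-)Lie bracket;
here `lcs br n` is g^{n+1} shifted so that `lcs br 0 = g`, `lcs br (n+1) = [g, lcs br n]`. -/
def lcs (br : g →ₗ[F] g →ₗ[F] g) : ℕ → Submodule F g
  | 0 => ⊤
  | n + 1 => Submodule.span F {z | ∃ x y, y ∈ lcs br n ∧ z = br x y}

section

variable {K V : Type*} [Field K] [AddCommGroup V] [Module K V]

theorem lcs_le_lcs_of_forall_exists {br br' : V →ₗ[K] V →ₗ[K] V}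
    (h : ∀ x y, ∃ x', br' x y = br x' y) (n : ℕ) : lcs br' n ≤ lcs br n := by
  induction n with
  | zero => exact le_rfl
  | succ n ih =>
    refine Submodule.span_le.mpr ?_
    rintro z ⟨x, y, hy, rfl⟩
    obtain ⟨x', hx'⟩ := h x y
    exact Submodule.subset_span ⟨x', y, ih hy, hx'⟩

theorem lcs_compr₂_le_lcs {br : V →ₗ[K] V →ₗ[K] V} {T : V →ₗ[K] V}
    (equivar : ∀ x y, T (br x y) = br (T x) y) (n : ℕ) : lcs (br.compr₂ T) n ≤ lcs br n :=
  lcs_le_lcs_of_forall_exists (fun x y => ⟨T x, equivar x y⟩) n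

end

theorem stmt_2_general (br : g →ₗ[F] g →ₗ[F] g) (T : g →ₗ[F] g)
    (equivar : ∀ x y, T (br x y) = br (T x) y)
    (hnil : ∃ m, lcs br m = ⊥) :
    ∃ m, lcs (br.compr₂ T) m = ⊥ := by
  obtain ⟨m, hm⟩ := hnil
  exact ⟨m, le_bot_iff.mp (hm ▸ lcs_compr₂_le_lcs equivar m)⟩

/-- If a Hom-Lie algebra with equivariant twist map is nilpotent, then
the Lie algebra (g, [·,·]_Lie) with [x,y]_Lie = T([x,y]) is nilpotent. -/
theorem stmt_2 (br : g →ₗ[F] g →ₗ[F] g) (T : g →ₗ[F] g)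
    (skew : ∀ x y, br x y = - br y x)
    (homJacobi : ∀ x y z, br (T x) (br y z) + br (T y) (br z x) + br (T z) (br x y) = 0)
    (equivar : ∀ x y, T (br x y) = br (T x) y)
    (hnil : ∃ m, lcs br m = ⊥) :
    ∃ m, lcs (br.compr₂ T) m = ⊥ :=
  stmt_2_general br T equivar hnil
end

section
/- Let (g, [·,·], T) be a Hom-Lie algebra with equivariant twist map T. Then Ker(T) ∩ Im(T) is an Abelian ideal of g: it is T-invariant, closed under bracketing with g, and [u,v] = 0 for all u,v ∈ Ker(T) ∩ Im(T). -/
/-!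
Skew-symmetry turns left equivariance into right equivariance, `T [x, y] = [x, T y]`, so both
`ker T` and `range T` are closed under bracketing with `g`. For `u ∈ ker T` and `T b ∈ range T`,
`[u, T b] = T [u, b] = [T u, b] = 0`.
-/

namespace LinearMap

variable {R M : Type*} [CommRing R] [AddCommGroup M] [Module R M]
  {br : M →ₗ[R] M →ₗ[R] M} {T : M →ₗ[R] M}

theorem apply_bracket_eq_bracket_apply_right (skew : ∀ x y, br x y = -br y x)
    (equivar : ∀ x y, T (br x y) = br (T x) y) (x y : M) :
    T (br x y) = br x (T y) := by
  rw [skew x y, map_neg, equivar, ← skew]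

theorem bracket_mem_ker_inf_range (equivar' : ∀ x y, T (br x y) = br x (T y)) (x : M)
    {u : M} (hu : u ∈ ker T ⊓ range T) : br x u ∈ ker T ⊓ range T := by
  obtain ⟨hu_ker, w, rfl⟩ := hu
  refine ⟨mem_ker.mpr ?_, br x w, equivar' x w⟩
  rw [equivar', mem_ker.mp hu_ker, map_zero]

theorem bracket_eq_zero_of_mem_ker_of_mem_range (equivar : ∀ x y, T (br x y) = br (T x) y)
    (equivar' : ∀ x y, T (br x y) = br x (T y)) {u v : M} (hu : u ∈ ker T)
    (hv : v ∈ range T) : br u v = 0 := by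
  obtain ⟨b, rfl⟩ := hv
  rw [← equivar', equivar, mem_ker.mp hu, map_zero, zero_apply]

end LinearMap

open LinearMap in
theorem stmt_4_general {F : Type*} [Field F]
    {g : Type*} [AddCommGroup g] [Module F g]
    (br : g →ₗ[F] g →ₗ[F] g) (T : g →ₗ[F] g)
    (skew : ∀ x y, br x y = - br y x)
    (equivar : ∀ x y, T (br x y) = br (T x) y) :
    (∀ x : g, ∀ u ∈ LinearMap.ker T ⊓ LinearMap.range T,
        br x u ∈ LinearMap.ker T ⊓ LinearMap.range T) ∧
    (∀ u ∈ LinearMap.ker T ⊓ LinearMap.range T,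
        T u ∈ LinearMap.ker T ⊓ LinearMap.range T) ∧
    (∀ u ∈ LinearMap.ker T ⊓ LinearMap.range T,
        ∀ v ∈ LinearMap.ker T ⊓ LinearMap.range T, br u v = 0) := by
  have equivar' := apply_bracket_eq_bracket_apply_right skew equivar
  refine ⟨fun x _ hu ↦ bracket_mem_ker_inf_range equivar' x hu, ?_, ?_⟩
  · rintro u ⟨hu_ker, -⟩
    rw [mem_ker.mp hu_ker]
    exact zero_mem _
  · rintro u ⟨hu_ker, -⟩ v ⟨-, hv_range⟩
    exact bracket_eq_zero_of_mem_ker_of_mem_range equivar equivar' hu_ker hv_range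

/-- For a Hom-Lie algebra with equivariant twist map T,
Ker(T) ∩ Im(T) is an Abelian ideal of g. -/
theorem stmt_4 {F : Type*} [Field F] [CharZero F]
    {g : Type*} [AddCommGroup g] [Module F g] [FiniteDimensional F g]
    (br : g →ₗ[F] g →ₗ[F] g) (T : g →ₗ[F] g)
    (skew : ∀ x y, br x y = - br y x)
    (homJacobi : ∀ x y z, br (T x) (br y z) + br (T y) (br z x) + br (T z) (br x y) = 0)
    (equivar : ∀ x y, T (br x y) = br (T x) y) :
    (∀ x : g, ∀ u ∈ LinearMap.ker T ⊓ LinearMap.range T,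
        br x u ∈ LinearMap.ker T ⊓ LinearMap.range T) ∧
    (∀ u ∈ LinearMap.ker T ⊓ LinearMap.range T,
        T u ∈ LinearMap.ker T ⊓ LinearMap.range T) ∧
    (∀ u ∈ LinearMap.ker T ⊓ LinearMap.range T,
        ∀ v ∈ LinearMap.ker T ⊓ LinearMap.range T, br u v = 0) :=
  stmt_4_general br T skew equivar
end

section
/- Let (g, [·,·], T, B) be a quadratic Hom-Lie algebra with equivariant twist map, and let I be an ideal of g containing Ker(T) + Im(T). Then I^⊥ ⊂ Ker(T) ∩ Im(T) ⊂ I, where I^⊥ = {x ∈ g : B(x,I) = 0}. -/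
namespace LinearMap.BilinForm

theorem orthogonal_range_eq_ker {R M : Type*} [CommSemiring R] [AddCommMonoid M] [Module R M]
    {B : LinearMap.BilinForm R M} {T : M →ₗ[R] M} (hB : B.SeparatingRight)
    (hT : IsAdjointPair B B T T) :
    B.orthogonal (range T) = ker T := by
  ext x
  simp only [mem_orthogonal_iff, mem_range, mem_ker, forall_exists_index, forall_apply_eq_imp_iff,
    hT _ x]
  exact ⟨hB _, fun h y => by rw [h, map_zero]⟩

section FiniteDimensional

variable {K V : Type*} [Field K] [AddCommGroup V] [Module K V] [FiniteDimensional K V]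
  {B : LinearMap.BilinForm K V} {T : V →ₗ[K] V}

theorem orthogonal_ker_eq_range (hB : B.Nondegenerate) (hB₀ : B.IsRefl)
    (hT : IsAdjointPair B B T T) : B.orthogonal (ker T) = range T := by
  rw [← orthogonal_range_eq_ker hB.2 hT, orthogonal_orthogonal hB hB₀]

theorem orthogonal_le_ker_inf_range (hB : B.Nondegenerate) (hB₀ : B.IsRefl)
    (hT : IsAdjointPair B B T T) {I : Submodule K V} (hI : ker T ⊔ range T ≤ I) :
    B.orthogonal I ≤ ker T ⊓ range T := by
  refine le_inf ?_ ?_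
  · rw [← orthogonal_range_eq_ker hB.2 hT]
    exact orthogonal_le (le_sup_right.trans hI)
  · rw [← orthogonal_ker_eq_range hB hB₀ hT]
    exact orthogonal_le (le_sup_left.trans hI)

end FiniteDimensional

end LinearMap.BilinForm

open LinearMap.BilinForm in
theorem stmt_8_general {F : Type*} [Field F]
    {g : Type*} [AddCommGroup g] [Module F g] [FiniteDimensional F g]
    (T : g →ₗ[F] g) (B : g →ₗ[F] g →ₗ[F] F)
    (hBsymm : ∀ x y, B x y = B y x)
    (hBnondeg : ∀ x, (∀ y, B x y = 0) → x = 0)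
    (hTselfadj : ∀ x y, B (T x) y = B x (T y))
    (I : Submodule F g)
    (hKI : LinearMap.ker T ⊔ LinearMap.range T ≤ I) :
    (∀ x : g, (∀ y ∈ I, B x y = 0) → x ∈ LinearMap.ker T ⊓ LinearMap.range T) ∧
    (LinearMap.ker T ⊓ LinearMap.range T ≤ I) := by
  have hBrefl : B.IsRefl := (IsSymm.mk hBsymm).isRefl
  have hB : B.Nondegenerate :=
    (LinearMap.IsRefl.nondegenerate_iff_separatingLeft hBrefl).mpr hBnondeg
  refine ⟨fun x hx => orthogonal_le_ker_inf_range hB hBrefl hTselfadj hKI ?_,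
    inf_le_left.trans (le_sup_left.trans hKI)⟩
  exact fun y hy => (hBsymm y x).trans (hx y hy)

/-- In a quadratic Hom-Lie algebra with equivariant twist map, if I is an
ideal containing Ker(T) + Im(T), then I^⊥ ⊆ Ker(T) ∩ Im(T) ⊆ I. -/
theorem stmt_8 {F : Type*} [Field F] [CharZero F]
    {g : Type*} [AddCommGroup g] [Module F g] [FiniteDimensional F g]
    (br : g →ₗ[F] g →ₗ[F] g) (T : g →ₗ[F] g) (B : g →ₗ[F] g →ₗ[F] F)
    (skew : ∀ x y, br x y = - br y x)
    (homJacobi : ∀ x y z, br (T x) (br y z) + br (T y) (br z x) + br (T z) (br x y) = 0)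
    (equivar : ∀ x y, T (br x y) = br (T x) y)
    (hBsymm : ∀ x y, B x y = B y x)
    (hBnondeg : ∀ x, (∀ y, B x y = 0) → x = 0)
    (hBinv : ∀ x y z, B (br x y) z = B x (br y z))
    (hTselfadj : ∀ x y, B (T x) y = B x (T y))
    (I : Submodule F g)
    (hIbr : ∀ x : g, ∀ y ∈ I, br x y ∈ I) (hIT : ∀ y ∈ I, T y ∈ I)
    (hKI : LinearMap.ker T ⊔ LinearMap.range T ≤ I) :
    (∀ x : g, (∀ y ∈ I, B x y = 0) → x ∈ LinearMap.ker T ⊓ LinearMap.range T) ∧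
    (LinearMap.ker T ⊓ LinearMap.range T ≤ I) :=
  stmt_8_general T B hBsymm hBnondeg hTselfadj I hKI
end

section
/- Let (h, [·,·]_h, L, B_h) be a quadratic Hom-Lie algebra with equivariant twist map L, let D ∈ o(B_h) and v' ∈ h satisfy: (i) L∘D = D∘L = ad_h(v'), (ii) ad_h(v') is a derivation of (h,[·,·]_h), (iii) D(v') = 0. Define on g = F·d ⊕ h ⊕ F·c the bracket [u,v] = [u,v]_h + B_h(D(u),v)·c for u,v∈h, [d,u] = D(u) for u∈h, [c,g] = 0, and the map T(d) = v' + λ'c, T(u) = L(u) + B_h(v',u)·c for u∈h, T(c) = 0. Then T is equivariant for this bracket and (g, [·,·], T) is a Hom-Lie algebra. -/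
/-!
As `c` is central and no bracket has a `d`-component, each identity splits into an identity in
`h` and one in the base ring. The `h`-parts follow from the Hom-Jacobi identity, equivariance of
`L`, `L ∘ D = D ∘ L = ad v'` and the derivation property of `ad v'`. For the `c`-parts: by
invariance `ad v'` is a `B`-skew derivation, so the cyclic sum of `B ([v', x], [y, z])` vanishes,
and `B ([v', x], D z) = B (L (D x), D z)` is symmetric in `x, z` since `L` is `B`-self-adjoint.
-/

section DoubleExtension

variable {R : Type*} [CommRing R] {h : Type*} [AddCommGroup h] [Module R h]
  (brh : h →ₗ[R] h →ₗ[R] h) (L D : h →ₗ[R] h) (B : h →ₗ[R] h →ₗ[R] R) (v' : h)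

/-- `(a, x, ξ) : R × h × R` stands for `a • d + x + ξ • c`. -/
def doubleExtensionBracket (X Y : R × h × R) : R × h × R :=
  (0, X.1 • D Y.2.1 - Y.1 • D X.2.1 + brh X.2.1 Y.2.1, B (D X.2.1) Y.2.1)

def doubleExtensionTwist (lam' : R) (X : R × h × R) : R × h × R :=
  (0, X.1 • v' + L X.2.1, X.1 * lam' + B v' X.2.1)

variable {brh L D B v'}

lemma bracket_twist_comm (hskew : ∀ u v, brh u v = - brh v u)
    (hLequiv : ∀ u v, L (brh u v) = brh (L u) v) (u v : h) :
    brh u (L v) = brh (L u) v := by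
  rw [hskew u (L v), ← hLequiv, hskew v u, map_neg, neg_neg, hLequiv]

lemma apply_map_eq_zero_of_skew (hDskew : ∀ u v, B (D u) v = - B u (D v)) (hDv' : D v' = 0)
    (u : h) : B v' (D u) = 0 := by
  simpa [hDv'] using (hDskew v' u).symm

lemma ad_skew (hskew : ∀ u v, brh u v = - brh v u)
    (hBinv : ∀ u v w, B (brh u v) w = B u (brh v w)) (u v w : h) :
    B (brh u v) w = - B v (brh u w) := by
  rw [hskew, map_neg, LinearMap.neg_apply, hBinv]

lemma ad_cyclic_sum_eq_zero (hskew : ∀ u v, brh u v = - brh v u)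
    (hBsymm : ∀ u v, B u v = B v u) (hBinv : ∀ u v w, B (brh u v) w = B u (brh v w))
    (hder : ∀ u v, brh v' (brh u v) = brh (brh v' u) v + brh u (brh v' v)) (x y z : h) :
    B (brh v' x) (brh y z) + B (brh v' y) (brh z x) + B (brh v' z) (brh x y) = 0 := by
  have hy : B (brh v' y) (brh z x) = B x (brh (brh v' y) z) := by rw [← hBinv, hBsymm]
  have hz : B (brh v' z) (brh x y) = B x (brh y (brh v' z)) := by rw [hBsymm, hBinv]
  rw [ad_skew hskew hBinv, hder, hy, hz, map_add]
  ring

lemma bracket_ad_map_comm (hBsymm : ∀ u v, B u v = B v u)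
    (hLselfadj : ∀ u v, B (L u) v = B u (L v)) (hLD : ∀ u, L (D u) = brh v' u) (x z : h) :
    B (brh v' x) (D z) = B (brh v' z) (D x) := by
  rw [← hLD x, hLselfadj, hLD, hBsymm]

lemma doubleExtensionBracket_skew (hskew : ∀ u v, brh u v = - brh v u)
    (hBsymm : ∀ u v, B u v = B v u) (hDskew : ∀ u v, B (D u) v = - B u (D v))
    (X Y : R × h × R) :
    doubleExtensionBracket brh D B X Y = - doubleExtensionBracket brh D B Y X := by
  simp only [doubleExtensionBracket, Prod.neg_mk, Prod.mk.injEq]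
  refine ⟨neg_zero.symm, ?_, ?_⟩
  · linear_combination (norm := module) hskew X.2.1 Y.2.1
  · linear_combination hDskew X.2.1 Y.2.1 - hBsymm X.2.1 (D Y.2.1)

lemma doubleExtensionTwist_bracket (hLequiv : ∀ u v, L (brh u v) = brh (L u) v)
    (hBinv : ∀ u v w, B (brh u v) w = B u (brh v w))
    (hDskew : ∀ u v, B (D u) v = - B u (D v)) (hLD : ∀ u, L (D u) = brh v' u)
    (hDL : ∀ u, D (L u) = brh v' u) (hDv' : D v' = 0) (lam' : R) (X Y : R × h × R) :
    doubleExtensionTwist L B v' lam' (doubleExtensionBracket brh D B X Y) =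
      doubleExtensionBracket brh D B (doubleExtensionTwist L B v' lam' X) Y := by
  have hBDv := apply_map_eq_zero_of_skew hDskew hDv'
  simp only [doubleExtensionBracket, doubleExtensionTwist, map_add, map_sub, map_smul,
    LinearMap.add_apply, LinearMap.smul_apply, hDv', smul_zero, zero_smul, zero_add, zero_mul,
    smul_eq_mul, Prod.mk.injEq, hDL, hLD]
  refine ⟨trivial, ?_, ?_⟩
  · linear_combination (norm := module) hLequiv X.2.1 Y.2.1
  · linear_combination X.1 * hBDv Y.2.1 - Y.1 * hBDv X.2.1 - hBinv v' X.2.1 Y.2.1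

lemma doubleExtensionBracket_homJacobi (hskew : ∀ u v, brh u v = - brh v u)
    (homJacobi : ∀ u v w,
      brh (L u) (brh v w) + brh (L v) (brh w u) + brh (L w) (brh u v) = 0)
    (hLequiv : ∀ u v, L (brh u v) = brh (L u) v) (hBsymm : ∀ u v, B u v = B v u)
    (hBinv : ∀ u v w, B (brh u v) w = B u (brh v w))
    (hLselfadj : ∀ u v, B (L u) v = B u (L v)) (hLD : ∀ u, L (D u) = brh v' u)
    (hDL : ∀ u, D (L u) = brh v' u)
    (hder : ∀ u v, brh v' (brh u v) = brh (brh v' u) v + brh u (brh v' v))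
    (hDv' : D v' = 0) (lam' : R) (X Y Z : R × h × R) :
    let brg := doubleExtensionBracket brh D B
    let T := doubleExtensionTwist L B v' lam'
    brg (T X) (brg Y Z) + brg (T Y) (brg Z X) + brg (T Z) (brg X Y) = 0 := by
  have hLDcomm u v : brh (L u) (D v) = brh u (brh v' v) := by
    rw [← bracket_twist_comm hskew hLequiv, hLD]
  have hsym := bracket_ad_map_comm hBsymm hLselfadj hLD
  obtain ⟨a, x, -⟩ := X
  obtain ⟨b, y, -⟩ := Y
  obtain ⟨c, z, -⟩ := Z
  simp only [doubleExtensionBracket, doubleExtensionTwist, map_add, map_sub, map_smul,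
    LinearMap.add_apply, LinearMap.smul_apply, hDv', smul_zero, zero_smul, zero_add, sub_zero,
    add_zero, smul_eq_mul, Prod.mk_add_mk, hDL, Prod.mk_eq_zero, hLDcomm]
  refine ⟨trivial, ?_, ?_⟩
  · linear_combination (norm := module)
      a • hder y z + b • hder z x + c • hder x y
      + a • hskew z (brh v' y) + b • hskew x (brh v' z) + c • hskew y (brh v' x)
      + homJacobi x y z
  · linear_combination b * hsym x z + c * hsym y x + a * hsym z y
      + ad_cyclic_sum_eq_zero hskew hBsymm hBinv hder x y z

end DoubleExtension

theorem stmt_13_general {F : Type*} [Field F]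
    {h : Type*} [AddCommGroup h] [Module F h]
    (brh : h →ₗ[F] h →ₗ[F] h) (L : h →ₗ[F] h) (Bh : h →ₗ[F] h →ₗ[F] F)
    (hskew : ∀ u v, brh u v = - brh v u)
    (homJacobi : ∀ u v w,
      brh (L u) (brh v w) + brh (L v) (brh w u) + brh (L w) (brh u v) = 0)
    (hLequiv : ∀ u v, L (brh u v) = brh (L u) v)
    (hBsymm : ∀ u v, Bh u v = Bh v u)
    (hBinv : ∀ u v w, Bh (brh u v) w = Bh u (brh v w))
    (hLselfadj : ∀ u v, Bh (L u) v = Bh u (L v))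
    (D : h →ₗ[F] h) (v' : h) (lam' : F)
    (hDskew : ∀ u v, Bh (D u) v = - Bh u (D v))
    (hLD : ∀ u, L (D u) = brh v' u)
    (hDL : ∀ u, D (L u) = brh v' u)
    (hder : ∀ u v, brh v' (brh u v) = brh (brh v' u) v + brh u (brh v' v))
    (hDv' : D v' = 0)
    (brg : (F × h × F) → (F × h × F) → (F × h × F))
    (hbrg : ∀ X Y : F × h × F,
      brg X Y = (0, X.1 • D Y.2.1 - Y.1 • D X.2.1 + brh X.2.1 Y.2.1,
        Bh (D X.2.1) Y.2.1))
    (T : (F × h × F) → (F × h × F))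
    (hT : ∀ X : F × h × F,
      T X = (0, X.1 • v' + L X.2.1, X.1 * lam' + Bh v' X.2.1)) :
    (∀ X Y, brg X Y = - brg Y X) ∧
    (∀ X Y, T (brg X Y) = brg (T X) Y) ∧
    (∀ X Y Z, brg (T X) (brg Y Z) + brg (T Y) (brg Z X) + brg (T Z) (brg X Y) = 0) := by
  obtain rfl : brg = doubleExtensionBracket brh D Bh := funext₂ hbrg
  obtain rfl : T = doubleExtensionTwist L Bh v' lam' := funext hT
  exact ⟨doubleExtensionBracket_skew hskew hBsymm hDskew,
    doubleExtensionTwist_bracket hLequiv hBinv hDskew hLD hDL hDv' lam',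
    doubleExtensionBracket_homJacobi hskew homJacobi hLequiv hBsymm hBinv hLselfadj hLD hDL hder
      hDv' lam'⟩

/-- One-dimensional double extension g = F·d ⊕ h ⊕ F·c of a quadratic
Hom-Lie algebra (h,[·,·]_h,L,B_h): the extended twist map T is equivariant and
(g,[·,·],T) is a Hom-Lie algebra.  Here g is modeled as F × h × F, with an element
(λ, u, ζ) standing for λ·d + u + ζ·c. -/
theorem stmt_13 {F : Type*} [Field F] [CharZero F]
    {h : Type*} [AddCommGroup h] [Module F h] [FiniteDimensional F h]
    (brh : h →ₗ[F] h →ₗ[F] h) (L : h →ₗ[F] h) (Bh : h →ₗ[F] h →ₗ[F] F)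
    (hskew : ∀ u v, brh u v = - brh v u)
    (homJacobi : ∀ u v w,
      brh (L u) (brh v w) + brh (L v) (brh w u) + brh (L w) (brh u v) = 0)
    (hLequiv : ∀ u v, L (brh u v) = brh (L u) v)
    (hBsymm : ∀ u v, Bh u v = Bh v u)
    (hBnondeg : ∀ u, (∀ v, Bh u v = 0) → u = 0)
    (hBinv : ∀ u v w, Bh (brh u v) w = Bh u (brh v w))
    (hLselfadj : ∀ u v, Bh (L u) v = Bh u (L v))
    (D : h →ₗ[F] h) (v' : h) (lam' : F)
    (hDskew : ∀ u v, Bh (D u) v = - Bh u (D v))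
    (hLD : ∀ u, L (D u) = brh v' u)
    (hDL : ∀ u, D (L u) = brh v' u)
    (hder : ∀ u v, brh v' (brh u v) = brh (brh v' u) v + brh u (brh v' v))
    (hDv' : D v' = 0)
    (brg : (F × h × F) → (F × h × F) → (F × h × F))
    (hbrg : ∀ X Y : F × h × F,
      brg X Y = (0, X.1 • D Y.2.1 - Y.1 • D X.2.1 + brh X.2.1 Y.2.1,
        Bh (D X.2.1) Y.2.1))
    (T : (F × h × F) → (F × h × F))
    (hT : ∀ X : F × h × F,
      T X = (0, X.1 • v' + L X.2.1, X.1 * lam' + Bh v' X.2.1)) :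
    (∀ X Y, brg X Y = - brg Y X) ∧
    (∀ X Y, T (brg X Y) = brg (T X) Y) ∧
    (∀ X Y Z, brg (T X) (brg Y Z) + brg (T Y) (brg Z X) + brg (T Z) (brg X Y) = 0) :=
  stmt_13_general brh L Bh hskew homJacobi hLequiv hBsymm hBinv hLselfadj D v' lam' hDskew hLD hDL
    hder hDv' brg hbrg T hT
end

section
/- In the setting of the one-dimensional double extension (Prop. 1.2), the bilinear form B on g = F·d ⊕ h ⊕ F·c defined by B(λd + u + ζc, λ'd + v + ζ'c) = λζ' + λ'ζ + B_h(u,v) is non-degenerate, symmetric, and invariant under the extended bracket, and the extended twist map T is B-self-adjoint: B(T(x),y) = B(x,T(y)) for all x,y ∈ g. -/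
namespace DoubleExtension

variable {R M : Type*} [CommRing R] [AddCommGroup M] [Module R M]

/-- A triple `(λ, u, ζ) : R × M × R` stands for `λ d + u + ζ c`. -/
def form (Bh : M →ₗ[R] M →ₗ[R] R) (X Y : R × M × R) : R :=
  X.1 * Y.2.2 + Y.1 * X.2.2 + Bh X.2.1 Y.2.1

def bracket (brh : M →ₗ[R] M →ₗ[R] M) (Bh : M →ₗ[R] M →ₗ[R] R) (D : M →ₗ[R] M)
    (X Y : R × M × R) : R × M × R :=
  (0, X.1 • D Y.2.1 - Y.1 • D X.2.1 + brh X.2.1 Y.2.1, Bh (D X.2.1) Y.2.1)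

def twist (L : M →ₗ[R] M) (Bh : M →ₗ[R] M →ₗ[R] R) (v' : M) (lam' : R)
    (X : R × M × R) : R × M × R :=
  (0, X.1 • v' + L X.2.1, X.1 * lam' + Bh v' X.2.1)

variable {Bh : M →ₗ[R] M →ₗ[R] R}

theorem form_comm (hBsymm : ∀ u v, Bh u v = Bh v u) (X Y : R × M × R) :
    form Bh X Y = form Bh Y X := by
  simp only [form, hBsymm X.2.1]
  ring

theorem eq_zero_of_form_eq_zero (hBnondeg : ∀ u, (∀ v, Bh u v = 0) → u = 0)
    (X : R × M × R) (hX : ∀ Y, form Bh X Y = 0) : X = 0 := by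
  obtain ⟨a, x, ζ⟩ := X
  have hζ : ζ = 0 := by simpa [form] using hX (1, 0, 0)
  have ha : a = 0 := by simpa [form] using hX (0, 0, 1)
  have hx : x = 0 := hBnondeg x fun v => by simpa [form] using hX (0, v, 0)
  simp [ha, hx, hζ, Prod.ext_iff]

theorem form_bracket {brh : M →ₗ[R] M →ₗ[R] M} {D : M →ₗ[R] M}
    (hBinv : ∀ u v w, Bh (brh u v) w = Bh u (brh v w))
    (hDskew : ∀ u v, Bh (D u) v = - Bh u (D v)) (X Y Z : R × M × R) :
    form Bh (bracket brh Bh D X Y) Z = form Bh X (bracket brh Bh D Y Z) := by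
  obtain ⟨a, x, ζ⟩ := X
  obtain ⟨b, y, η⟩ := Y
  obtain ⟨c, z, θ⟩ := Z
  simp only [form, bracket, map_add, map_sub, map_smul, LinearMap.add_apply,
    LinearMap.sub_apply, LinearMap.smul_apply, smul_eq_mul]
  rw [hBinv x y z, hDskew x z, hDskew x y]
  ring

theorem form_twist {L : M →ₗ[R] M} (v' : M) (lam' : R)
    (hBsymm : ∀ u v, Bh u v = Bh v u) (hLselfadj : ∀ u v, Bh (L u) v = Bh u (L v))
    (X Y : R × M × R) :
    form Bh (twist L Bh v' lam' X) Y = form Bh X (twist L Bh v' lam' Y) := by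
  obtain ⟨a, x, ζ⟩ := X
  obtain ⟨b, y, η⟩ := Y
  simp only [form, twist, map_add, map_smul, LinearMap.add_apply, LinearMap.smul_apply,
    smul_eq_mul]
  rw [hLselfadj x y, hBsymm v' x, hBsymm v' y]
  ring

end DoubleExtension

open DoubleExtension in
theorem stmt_14_general {F : Type*} [Field F]
    {h : Type*} [AddCommGroup h] [Module F h]
    (brh : h →ₗ[F] h →ₗ[F] h) (L : h →ₗ[F] h) (Bh : h →ₗ[F] h →ₗ[F] F)
    (hBsymm : ∀ u v, Bh u v = Bh v u)
    (hBnondeg : ∀ u, (∀ v, Bh u v = 0) → u = 0)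
    (hBinv : ∀ u v w, Bh (brh u v) w = Bh u (brh v w))
    (hLselfadj : ∀ u v, Bh (L u) v = Bh u (L v))
    (D : h →ₗ[F] h) (v' : h) (lam' : F)
    (hDskew : ∀ u v, Bh (D u) v = - Bh u (D v))
    (brg : (F × h × F) → (F × h × F) → (F × h × F))
    (hbrg : ∀ X Y : F × h × F,
      brg X Y = (0, X.1 • D Y.2.1 - Y.1 • D X.2.1 + brh X.2.1 Y.2.1,
        Bh (D X.2.1) Y.2.1))
    (T : (F × h × F) → (F × h × F))
    (hT : ∀ X : F × h × F,
      T X = (0, X.1 • v' + L X.2.1, X.1 * lam' + Bh v' X.2.1))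
    (B : (F × h × F) → (F × h × F) → F)
    (hB : ∀ X Y : F × h × F,
      B X Y = X.1 * Y.2.2 + Y.1 * X.2.2 + Bh X.2.1 Y.2.1) :
    (∀ X Y, B X Y = B Y X) ∧
    (∀ X, (∀ Y, B X Y = 0) → X = 0) ∧
    (∀ X Y Z, B (brg X Y) Z = B X (brg Y Z)) ∧
    (∀ X Y, B (T X) Y = B X (T Y)) := by
  obtain rfl : B = form Bh := funext₂ hB
  obtain rfl : brg = bracket brh Bh D := funext₂ hbrg
  obtain rfl : T = twist L Bh v' lam' := funext hT
  exact ⟨form_comm hBsymm, eq_zero_of_form_eq_zero hBnondeg, form_bracket hBinv hDskew,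
    form_twist v' lam' hBsymm hLselfadj⟩

/-- In the one-dimensional double extension g = F·d ⊕ h ⊕ F·c (Prop. 1.2)
the bilinear form B(λd+u+ζc, lam'd+v+ζ'c) = λζ' + lam'ζ + B_h(u,v) is non-degenerate,
symmetric and invariant under the extended bracket, and the extended twist map T is
B-self-adjoint. -/
theorem stmt_14 {F : Type*} [Field F] [CharZero F]
    {h : Type*} [AddCommGroup h] [Module F h] [FiniteDimensional F h]
    (brh : h →ₗ[F] h →ₗ[F] h) (L : h →ₗ[F] h) (Bh : h →ₗ[F] h →ₗ[F] F)
    (hskew : ∀ u v, brh u v = - brh v u)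
    (homJacobi : ∀ u v w,
      brh (L u) (brh v w) + brh (L v) (brh w u) + brh (L w) (brh u v) = 0)
    (hLequiv : ∀ u v, L (brh u v) = brh (L u) v)
    (hBsymm : ∀ u v, Bh u v = Bh v u)
    (hBnondeg : ∀ u, (∀ v, Bh u v = 0) → u = 0)
    (hBinv : ∀ u v w, Bh (brh u v) w = Bh u (brh v w))
    (hLselfadj : ∀ u v, Bh (L u) v = Bh u (L v))
    (D : h →ₗ[F] h) (v' : h) (lam' : F)
    (hDskew : ∀ u v, Bh (D u) v = - Bh u (D v))
    (hLD : ∀ u, L (D u) = brh v' u)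
    (hDL : ∀ u, D (L u) = brh v' u)
    (hder : ∀ u v, brh v' (brh u v) = brh (brh v' u) v + brh u (brh v' v))
    (hDv' : D v' = 0)
    (brg : (F × h × F) → (F × h × F) → (F × h × F))
    (hbrg : ∀ X Y : F × h × F,
      brg X Y = (0, X.1 • D Y.2.1 - Y.1 • D X.2.1 + brh X.2.1 Y.2.1,
        Bh (D X.2.1) Y.2.1))
    (T : (F × h × F) → (F × h × F))
    (hT : ∀ X : F × h × F,
      T X = (0, X.1 • v' + L X.2.1, X.1 * lam' + Bh v' X.2.1))
    (B : (F × h × F) → (F × h × F) → F)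
    (hB : ∀ X Y : F × h × F,
      B X Y = X.1 * Y.2.2 + Y.1 * X.2.2 + Bh X.2.1 Y.2.1) :
    (∀ X Y, B X Y = B Y X) ∧
    (∀ X, (∀ Y, B X Y = 0) → X = 0) ∧
    (∀ X Y Z, B (brg X Y) Z = B X (brg Y Z)) ∧
    (∀ X Y, B (T X) Y = B X (T Y)) :=
  stmt_14_general brh L Bh hBsymm hBnondeg hBinv hLselfadj D v' lam' hDskew brg hbrg T hT B hB
end

section
/- In the setting of Prop. 1.1, with Γ(u,v) = Σ_k B_h(ρ(x_k)(u),v)ξ^k and R = f* ∘ B_h^♭, the identities R∘ρ(x) = ad_s*(x)∘R = Γ(f(x),·) hold for all x ∈ s, and R([u,v]_h) = Γ(L(u),v) = Γ(u,L(v)) for all u,v ∈ h. -/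
/-! Since `ξ^k` is the basis dual to `x_k`, evaluating `Γ(u, v)` at `y ∈ s` gives
`B_h(ρ(y)u, v)`. After evaluation at `y`, each identity is a short rewrite using the
ρ-skewness, symmetry, invariance and `L`-self-adjointness of `B_h` together with (i) and (ii). -/

theorem stmt_15_general {F : Type*} [Field F]
    {h : Type*} [AddCommGroup h] [Module F h]
    {s : Type*} [LieRing s] [LieAlgebra F s]
    {r : ℕ} (b : Module.Basis (Fin r) F s)
    (brh : h →ₗ[F] h →ₗ[F] h) (L : h →ₗ[F] h) (Bh : h →ₗ[F] h →ₗ[F] F)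
    (hBsymm : ∀ u v, Bh u v = Bh v u)
    (hBinv : ∀ u v w, Bh (brh u v) w = Bh u (brh v w))
    (hLselfadj : ∀ u v, Bh (L u) v = Bh u (L v))
    (f : s →ₗ[F] h) (ρ : s →ₗ[F] h →ₗ[F] h)
    (hρskew : ∀ x u v, Bh (ρ x u) v = - Bh u (ρ x v))
    (hyp_i : ∀ x y : s, f ⁅x, y⁆ = ρ x (f y))
    (hyp_ii : ∀ (x : s) (u : h), L (ρ x u) = brh (f x) u ∧ ρ x (L u) = brh (f x) u)
    (Γ : h → h → Module.Dual F s)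
    (hΓ : ∀ u v, Γ u v = ∑ k, Bh (ρ (b k) u) v • b.coord k)
    (R : h → Module.Dual F s)
    (hR : ∀ (v : h) (x : s), R v x = Bh v (f x)) :
    (∀ (x : s) (u : h), R (ρ x u) = Γ (f x) u) ∧
    (∀ (x : s) (u : h) (y : s), R (ρ x u) y = - R u ⁅x, y⁆) ∧
    (∀ u v : h, R (brh u v) = Γ (L u) v) ∧
    (∀ u v : h, Γ (L u) v = Γ u (L v)) := by
  have hΓ_apply (u v : h) (y : s) : Γ u v y = Bh (ρ y u) v := by
    rw [hΓ]
    exact LinearMap.congr_fun (b.sum_dual_apply_smul_coord (Bh.flip v ∘ₗ ρ.flip u)) y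
  have hR_ρ (x : s) (u : h) (y : s) : R (ρ x u) y = - Bh u (f ⁅x, y⁆) := by
    rw [hR, hyp_i, hρskew]
  refine ⟨fun x u => ?_, fun x u y => by rw [hR_ρ, hR], fun u v => ?_, fun u v => ?_⟩
  · ext y
    rw [hR_ρ, hΓ_apply, ← hyp_i, ← lie_skew, map_neg, map_neg, neg_neg, hBsymm]
  · ext y
    rw [hR, hΓ_apply, (hyp_ii y u).2, hBsymm, hBinv, hBsymm]
  · ext y
    rw [hΓ_apply, hΓ_apply, (hyp_ii y u).2, ← (hyp_ii y u).1, hLselfadj]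

/-- In the setting of Prop. 1.1, with Γ(u,v) = Σ_k B_h(ρ(x_k)(u),v)ξ^k and
R = f* ∘ B_h^♭, one has R∘ρ(x) = ad_s*(x)∘R = Γ(f(x),·) for all x ∈ s, and
R([u,v]_h) = Γ(L(u),v) = Γ(u,L(v)) for all u,v ∈ h. -/
theorem stmt_15 {F : Type*} [Field F] [CharZero F]
    {h : Type*} [AddCommGroup h] [Module F h] [FiniteDimensional F h]
    {s : Type*} [LieRing s] [LieAlgebra F s] [Module.Finite F s]
    {r : ℕ} (b : Module.Basis (Fin r) F s)
    (brh : h →ₗ[F] h →ₗ[F] h) (L : h →ₗ[F] h) (Bh : h →ₗ[F] h →ₗ[F] F)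
    (hskew : ∀ u v, brh u v = - brh v u)
    (homJacobi : ∀ u v w,
      brh (L u) (brh v w) + brh (L v) (brh w u) + brh (L w) (brh u v) = 0)
    (hLequiv : ∀ u v, L (brh u v) = brh (L u) v)
    (hBsymm : ∀ u v, Bh u v = Bh v u)
    (hBnondeg : ∀ u, (∀ v, Bh u v = 0) → u = 0)
    (hBinv : ∀ u v w, Bh (brh u v) w = Bh u (brh v w))
    (hLselfadj : ∀ u v, Bh (L u) v = Bh u (L v))
    (f : s →ₗ[F] h) (ρ : s →ₗ[F] h →ₗ[F] h)
    (hρskew : ∀ x u v, Bh (ρ x u) v = - Bh u (ρ x v))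
    (hyp_i : ∀ x y : s, f ⁅x, y⁆ = ρ x (f y))
    (hyp_ii : ∀ (x : s) (u : h), L (ρ x u) = brh (f x) u ∧ ρ x (L u) = brh (f x) u)
    (hyp_ii_der : ∀ (x : s) (u v : h),
      brh (f x) (brh u v) = brh (brh (f x) u) v + brh u (brh (f x) v))
    (hyp_iii : ∀ (x y : s) (u : h),
      ρ ⁅x, y⁆ (L u) = ρ x (ρ y (L u)) - ρ y (ρ x (L u)))
    (Γ : h → h → Module.Dual F s)
    (hΓ : ∀ u v, Γ u v = ∑ k, Bh (ρ (b k) u) v • b.coord k)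
    (R : h → Module.Dual F s)
    (hR : ∀ (v : h) (x : s), R v x = Bh v (f x)) :
    (∀ (x : s) (u : h), R (ρ x u) = Γ (f x) u) ∧
    (∀ (x : s) (u : h) (y : s), R (ρ x u) y = - R u ⁅x, y⁆) ∧
    (∀ u v : h, R (brh u v) = Γ (L u) v) ∧
    (∀ u v : h, Γ (L u) v = Γ u (L v)) :=
  stmt_15_general b brh L Bh hBsymm hBinv hLselfadj f ρ hρskew hyp_i hyp_ii Γ hΓ R hR
end
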